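/- Let Δ be an obtuse basis of V and let θ be a linear isometry of V with θ(Δ) = Δ. Let Q ⊆ Δ, let Q₀ := Q ∩ θ⁻¹(Q), and let Q⁺ be the union of the θ-orbits of the elements of Q (the smallest θ-stable subset of Δ containing Q). Define q : V → V by letting q(X) be the orthogonal projection of X − θ(X) onto the subspace 𝔞_Q := {Y ∈ V : ⟨α, Y⟩ = 0 for all α ∈ Q}. Then there exists a constant c > 0 such that ‖X‖ ≤ c‖q(X)‖ for every X ∈ V satisfying the following conditions: X ∈ span(Q⁺); ⟨α, X⟩ = 0 for all α ∈ Q₀; τ_Q^{Q⁺}(X) = 1; and ⟨ϖ, X⟩ ≤ 0 for every member ϖ of the dual basis Δ̂_{Q₀}^{Q} of Δ_{Q₀}^{Q} in V_{Q₀}^{Q}. -/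

import Mathlib

/-!
By homogeneity and compactness of the unit sphere it suffices to show that `q` has no nonzero
zero on the closed cone obtained by relaxing `τ_Q^{Q⁺}(X) = 1` to weak inequalities. So let `X`
lie in that cone with `X - θ X ∈ span Q`, and split `X = U + W` with `U ∈ span Q`, `W ⊥ Q`.
As `X ⊥ Q₀`, `U` lies in `V_{Q₀}^Q`, where its coordinates along the `γ_{Q₀}` are the pairings
`⟪ϖ_γ, X⟫ ≤ 0`; and `⟪W, θ γ_{Q₀}⟫ = ⟪(θ γ)_Q, X⟫ ≥ 0` because `θ γ ∈ Q⁺ \ Q`. Hence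
`‖W‖² = ⟪W, θ X⟫ ≤ ⟪W, θ W⟫`, so `θ W = W`; then `W` is orthogonal to every `θ`-orbit of `Q`,
hence to `X ∈ span Q⁺`, and `W = 0`. Now `X` and `θ X` both lie in `span Q`, and since `θ`
maps the linearly independent family `Δ` into itself this puts `X` in `span Q₀`. Being
orthogonal to `Q₀`, `X` vanishes.
-/

open scoped RealInnerProductSpace Classical

variable {V : Type*} [NormedAddCommGroup V] [InnerProductSpace ℝ V] [FiniteDimensional ℝ V]
  [DecidableEq V]

/-- `projPerp A γ` is `γ_A`. -/
noncomputable def projPerp (A : Finset V) (γ : V) : V :=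
  (Submodule.orthogonalProjectionOnto (Submodule.span ℝ (A : Set V))ᗮ γ : V)

/-- `τ_A^B`. -/
noncomputable def tauFn (A B : Finset V) (H : V) : ℝ :=
  if ∀ γ ∈ B \ A, 0 < ⟪projPerp A γ, H⟫ then 1 else 0

/-- `τ̂_A^B`, where `ϖ A B` is the dual basis `Δ̂_A^B`. -/
noncomputable def tauHatFn (ϖ : Finset V → Finset V → V → V) (A B : Finset V) (H : V) : ℝ :=
  if ∀ γ ∈ B \ A, 0 < ⟪ϖ A B γ, H⟫ then 1 else 0

/-- `(ϖ A B γ)_{γ ∈ B \ A}` is the dual basis `Δ̂_A^B` for all `A ⊆ B ⊆ Δ`. -/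
def IsDualFamily (Δ : Finset V) (ϖ : Finset V → Finset V → V → V) : Prop :=
  ∀ A B : Finset V, A ⊆ B → B ⊆ Δ → ∀ γ ∈ B \ A,
    (ϖ A B γ ∈ Submodule.span ℝ (B : Set V) ⊓ (Submodule.span ℝ (A : Set V))ᗮ) ∧
    ∀ δ ∈ B \ A, ⟪ϖ A B γ, projPerp A δ⟫ = if δ = γ then 1 else 0

open Submodule

theorem LinearIndepOn.span_inf_span_le_span_inter {R M : Type*} [Ring R] [AddCommGroup M]
    [Module R M] {s t u : Set M} (hu : LinearIndepOn R id u) (hs : s ⊆ u) (ht : t ⊆ u) :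
    span R s ⊓ span R t ≤ span R (s ∩ t) := by
  have himage : ∀ r ⊆ u, ((↑) : u → M) '' ((↑) ⁻¹' r) = r := fun r hr => by
    rw [Subtype.image_preimage_coe, Set.inter_eq_right.2 hr]
  intro x hx
  obtain ⟨hxs, hxt⟩ := mem_inf.1 hx
  rw [← himage s hs, Finsupp.mem_span_image_iff_linearCombination] at hxs
  rw [← himage t ht, Finsupp.mem_span_image_iff_linearCombination] at hxt
  rw [← himage (s ∩ t) (Set.inter_subset_left.trans hs),
    Finsupp.mem_span_image_iff_linearCombination]
  obtain ⟨l, hls, rfl⟩ := hxs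
  obtain ⟨l', hlt, hl⟩ := hxt
  rw [hu.finsuppLinearCombination_injective hl] at hlt
  exact ⟨l, by rw [Set.preimage_inter, Finsupp.supported_inter]; exact ⟨hls, hlt⟩, rfl⟩

theorem mem_span_sep_of_mem_span_of_map_mem_span {R M : Type*} [Ring R] [AddCommGroup M]
    [Module R M] {Δ s : Set M} (hΔ : LinearIndepOn R id Δ) (hs : s ⊆ Δ) (θ : M ≃ₗ[R] M)
    (hθ : θ '' s ⊆ Δ) {x : M} (hx : x ∈ span R s) (hθx : θ x ∈ span R s) :
    x ∈ span R {a ∈ s | θ a ∈ s} := by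
  have himage : θ '' {a ∈ s | θ a ∈ s} = θ '' s ∩ s := by
    ext
    constructor
    · rintro ⟨a, ⟨ha, hθa⟩, rfl⟩
      exact ⟨Set.mem_image_of_mem θ ha, hθa⟩
    · rintro ⟨⟨a, ha, rfl⟩, hθa⟩
      exact ⟨a, ⟨ha, hθa⟩, rfl⟩
  have hθxs : θ x ∈ span R (θ '' s) := apply_mem_span_image_of_mem_span (θ : M →ₗ[R] M) hx
  have hθx' := hΔ.span_inf_span_le_span_inter hθ hs (mem_inf.2 ⟨hθxs, hθx⟩)
  rw [← himage, ← LinearEquiv.coe_coe, ← map_span] at hθx'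
  obtain ⟨y, hy, hyx⟩ := hθx'
  rwa [← θ.injective hyx]

theorem exists_norm_le_mul_norm_of_isClosed_of_smul_mem {E F : Type*} [NormedAddCommGroup E]
    [NormedSpace ℝ E] [FiniteDimensional ℝ E] [NormedAddCommGroup F] [NormedSpace ℝ F]
    {C : Set E} (hC : IsClosed C) (hsmul : ∀ x ∈ C, ∀ r : ℝ, 0 < r → r • x ∈ C)
    (f : E →L[ℝ] F) (hf : ∀ x ∈ C, f x = 0 → x = 0) :
    ∃ c : ℝ, 0 < c ∧ ∀ x ∈ C, ‖x‖ ≤ c * ‖f x‖ := by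
  have hpos : ∀ x ∈ C ∩ Metric.sphere 0 1, 0 < ‖f x‖ := fun x hx =>
    norm_pos_iff.2 fun hfx => by simpa [hf x hx.1 hfx] using hx.2
  obtain ⟨m, hm, hmf⟩ := ((isCompact_sphere 0 1).inter_left hC).exists_forall_le'
    (f := fun x => ‖f x‖) (by fun_prop) hpos
  refine ⟨m⁻¹, inv_pos.2 hm, fun x hx => ?_⟩
  rcases eq_or_ne x 0 with rfl | hx0
  · simp
  have hxn : 0 < ‖x‖ := norm_pos_iff.2 hx0
  have hle := hmf (‖x‖⁻¹ • x) ⟨hsmul x hx _ (inv_pos.2 hxn), by simp [norm_smul, hxn.ne']⟩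
  rw [map_smul, norm_smul, norm_inv, norm_norm, inv_mul_eq_div, le_div_iff₀ hxn] at hle
  rwa [inv_mul_eq_div, le_div_iff₀ hm, mul_comm]

theorem eq_of_norm_eq_of_sq_norm_le_inner {E : Type*} [NormedAddCommGroup E]
    [InnerProductSpace ℝ E] {x y : E} (hn : ‖y‖ = ‖x‖) (h : ‖x‖ ^ 2 ≤ ⟪x, y⟫) : y = x := by
  rw [eq_comm, ← sub_eq_zero, ← norm_eq_zero, ← sq_nonpos_iff, norm_sub_sq_real, hn]
  linarith

theorem LinearIsometryEquiv.zpow_apply_eq_self {R E : Type*} [Semiring R]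
    [SeminormedAddCommGroup E] [Module R E] (θ : E ≃ₗᵢ[R] E) {x : E} (hx : θ x = x) (n : ℤ) :
    (θ ^ n) x = x :=
  let stabilizer : Subgroup (E ≃ₗᵢ[R] E) :=
    { carrier := {g | g x = x}
      mul_mem' := fun {g g'} (hg : g x = x) (hg' : g' x = x) => by
        simp only [Set.mem_ofPred_eq, coe_mul, Function.comp_apply, hg', hg]
      one_mem' := rfl
      inv_mem' := fun {g} (hg : g x = x) => by
        simp only [Set.mem_ofPred_eq, coe_inv]
        exact g.symm_apply_eq.2 hg.symm }
  stabilizer.zpow_mem hx n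

theorem mem_orthogonal_span_iff {E : Type*} [NormedAddCommGroup E] [InnerProductSpace ℝ E]
    {s : Set E} {x : E} : x ∈ (span ℝ s)ᗮ ↔ ∀ u ∈ s, ⟪u, x⟫ = 0 := by
  refine ⟨fun h u hu => inner_right_of_mem_orthogonal (subset_span hu) h, fun h => ?_⟩
  have hle : span ℝ s ≤ (ℝ ∙ x)ᗮ :=
    span_le.2 fun u hu => mem_orthogonal_singleton_iff_inner_left.2 (h u hu)
  exact (mem_orthogonal _ _).2 fun u hu => mem_orthogonal_singleton_iff_inner_left.1 (hle hu)

section projPerp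

variable {E : Type*} [NormedAddCommGroup E] [InnerProductSpace ℝ E] {A B : Finset E}

theorem projPerp_eq_starProjection (A : Finset E) :
    projPerp A = (span ℝ (A : Set E))ᗮ.starProjection := rfl

theorem projPerp_mem_orthogonal (A : Finset E) (x : E) : projPerp A x ∈ (span ℝ (A : Set E))ᗮ :=
  starProjection_apply_mem _ x

theorem sub_projPerp_mem_span (A : Finset E) (x : E) : x - projPerp A x ∈ span ℝ (A : Set E) := by
  have := sub_starProjection_mem_orthogonal (K := (span ℝ (A : Set E))ᗮ) x
  rwa [orthogonal_orthogonal] at this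

theorem projPerp_eq_zero_iff {x : E} : projPerp A x = 0 ↔ x ∈ span ℝ (A : Set E) := by
  rw [projPerp_eq_starProjection, starProjection_apply_eq_zero_iff, orthogonal_orthogonal]

theorem projPerp_eq_self_iff {x : E} : projPerp A x = x ↔ x ∈ (span ℝ (A : Set E))ᗮ :=
  starProjection_eq_self_iff

theorem inner_projPerp_left_eq_right (A : Finset E) (x y : E) :
    ⟪projPerp A x, y⟫ = ⟪x, projPerp A y⟫ :=
  inner_starProjection_left_eq_right _ x y

theorem real_inner_projPerp_self (A : Finset E) (x : E) :
    ⟪x, projPerp A x⟫ = ‖projPerp A x‖ ^ 2 := by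
  rw [← real_inner_self_eq_norm_sq, ← sub_add_cancel x (projPerp A x), inner_add_left,
    sub_add_cancel, inner_right_of_mem_orthogonal (sub_projPerp_mem_span A x)
      (projPerp_mem_orthogonal A x), zero_add]

theorem eq_sum_inner_smul_projPerp [DecidableEq E] (hAB : A ⊆ B) {ϖ : E → E}
    (hdual : ∀ γ ∈ B \ A, ∀ δ ∈ B \ A, ⟪ϖ γ, projPerp A δ⟫ = if δ = γ then 1 else 0)
    {U : E} (hU : U ∈ span ℝ (B : Set E) ⊓ (span ℝ (A : Set E))ᗮ) :
    U = ∑ γ ∈ B \ A, ⟪ϖ γ, U⟫ • projPerp A γ := by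
  obtain ⟨c, -, hc⟩ := mem_span_finset.1 (mem_inf.1 hU).1
  have hsum : U = ∑ γ ∈ B \ A, c γ • projPerp A γ := by
    calc U = projPerp A U := (projPerp_eq_self_iff.2 (mem_inf.1 hU).2).symm
      _ = ∑ γ ∈ B, c γ • projPerp A γ := by
        simp only [← hc, projPerp_eq_starProjection, map_sum, map_smul]
      _ = ∑ γ ∈ B \ A, c γ • projPerp A γ := by
        rw [← Finset.sum_sdiff hAB, Finset.sum_eq_zero (s := A) fun γ hγ => by
          rw [projPerp_eq_zero_iff.2 (subset_span hγ), smul_zero], add_zero]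
  refine hsum.trans (Finset.sum_congr rfl fun δ hδ => ?_)
  rw [hsum, inner_sum, Finset.sum_eq_single_of_mem δ hδ fun γ hγ hγδ => by
    rw [real_inner_smul_right, hdual δ hδ γ hγ, if_neg hγδ, mul_zero]]
  rw [real_inner_smul_right, hdual δ hδ δ hδ, if_pos rfl, mul_one]

theorem inner_projPerp_map_projPerp {F : Type*} [FunLike F E E] [LinearMapClass F ℝ E E]
    (θ : F) (hθ : ∀ α ∈ A, θ α ∈ B) (x γ : E) :
    ⟪projPerp B x, θ (projPerp A γ)⟫ = ⟪x, projPerp B (θ γ)⟫ := by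
  have hres : θ (γ - projPerp A γ) ∈ span ℝ (B : Set E) := by
    refine span_mono ?_ <|
      apply_mem_span_image_of_mem_span (θ : E →ₗ[ℝ] E) (sub_projPerp_mem_span A γ)
    rintro _ ⟨α, hα, rfl⟩
    exact hθ α hα
  have hsplit : θ (projPerp A γ) = θ γ - θ (γ - projPerp A γ) := by rw [map_sub, sub_sub_cancel]
  rw [← inner_projPerp_left_eq_right, hsplit, inner_sub_right,
    inner_left_of_mem_orthogonal hres (projPerp_mem_orthogonal B x), sub_zero]

end projPerp

section admissibleCone

variable {E : Type*} [NormedAddCommGroup E] [InnerProductSpace ℝ E] [DecidableEq E]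
  {Q Q₀ Qplus : Finset E} {ϖ : E → E}

/-- The admissible set of the theorem with `τ_Q^{Q⁺}(X) = 1` relaxed to weak inequalities, so
that it is closed. -/
def admissibleCone (Q Q₀ Qplus : Finset E) (ϖ : E → E) : Set E :=
  {X | X ∈ span ℝ (Qplus : Set E) ∧ (∀ α ∈ Q₀, ⟪α, X⟫ = 0) ∧
    (∀ γ ∈ Qplus \ Q, 0 ≤ ⟪projPerp Q γ, X⟫) ∧ ∀ γ ∈ Q \ Q₀, ⟪ϖ γ, X⟫ ≤ 0}

theorem isClosed_admissibleCone : IsClosed (admissibleCone Q Q₀ Qplus ϖ) := by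
  simp only [admissibleCone, Set.ofPred_and, Set.ofPred_forall, SetLike.setOfPred_mem_eq]
  exact (closed_of_finiteDimensional _).inter <|
    (isClosed_biInter fun α _ => isClosed_eq (by fun_prop) (by fun_prop)).inter <|
    (isClosed_biInter fun γ _ => isClosed_le (by fun_prop) (by fun_prop)).inter <|
    isClosed_biInter fun γ _ => isClosed_le (by fun_prop) (by fun_prop)

theorem smul_mem_admissibleCone {X : E} (hX : X ∈ admissibleCone Q Q₀ Qplus ϖ) {r : ℝ}
    (hr : 0 ≤ r) : r • X ∈ admissibleCone Q Q₀ Qplus ϖ := by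
  obtain ⟨hXspan, hXQ₀, hXQplus, hXϖ⟩ := hX
  refine ⟨smul_mem _ r hXspan, fun α hα => ?_, fun γ hγ => ?_, fun γ hγ => ?_⟩ <;>
    rw [real_inner_smul_right]
  · rw [hXQ₀ α hα, mul_zero]
  · exact mul_nonneg hr (hXQplus γ hγ)
  · exact mul_nonpos_of_nonneg_of_nonpos hr (hXϖ γ hγ)

theorem projPerp_eq_zero_of_mem_admissibleCone {θ : E ≃ₗᵢ[ℝ] E} (hQ₀Q : Q₀ ⊆ Q)
    (hθQ₀ : ∀ α ∈ Q₀, θ α ∈ Q) (hθQ : ∀ γ ∈ Q \ Q₀, θ γ ∈ Qplus \ Q)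
    (horbit : ∀ β ∈ Qplus, ∃ α ∈ Q, ∃ n : ℤ, (θ ^ n) α = β)
    (hϖmem : ∀ γ ∈ Q \ Q₀, ϖ γ ∈ span ℝ (Q : Set E))
    (hϖdual : ∀ γ ∈ Q \ Q₀, ∀ δ ∈ Q \ Q₀, ⟪ϖ γ, projPerp Q₀ δ⟫ = if δ = γ then 1 else 0)
    {X : E} (hX : X ∈ admissibleCone Q Q₀ Qplus ϖ) (hq : projPerp Q (X - θ X) = 0) :
    projPerp Q X = 0 := by
  obtain ⟨hXspan, hXQ₀, hXQplus, hXϖ⟩ := hX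
  set W := projPerp Q X
  have hW : W ∈ (span ℝ (Q : Set E))ᗮ := projPerp_mem_orthogonal Q X
  have hU : X - W ∈ span ℝ (Q : Set E) ⊓ (span ℝ (Q₀ : Set E))ᗮ :=
    mem_inf.2 ⟨sub_projPerp_mem_span Q X,
      sub_mem (mem_orthogonal_span_iff.2 hXQ₀) (orthogonal_le (span_mono hQ₀Q) hW)⟩
  have hθU : ⟪W, θ (X - W)⟫ ≤ 0 := by
    rw [eq_sum_inner_smul_projPerp hQ₀Q hϖdual hU, map_sum, inner_sum]
    refine Finset.sum_nonpos fun γ hγ => ?_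
    rw [map_smul, real_inner_smul_right, inner_projPerp_map_projPerp θ hθQ₀, inner_sub_right,
      inner_right_of_mem_orthogonal (hϖmem γ hγ) hW, sub_zero, real_inner_comm (projPerp Q (θ γ))]
    exact mul_nonpos_of_nonpos_of_nonneg (hXϖ γ hγ) (hXQplus _ (hθQ γ hγ))
  have hθX : projPerp Q (θ X) = W := by
    rw [projPerp_eq_starProjection, map_sub, sub_eq_zero] at hq
    exact hq.symm
  have hθW : θ W = W := by
    refine eq_of_norm_eq_of_sq_norm_le_inner (θ.norm_map W) ?_
    calc ‖W‖ ^ 2 = ⟪W, θ (X - W)⟫ + ⟪W, θ W⟫ := by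
          rw [← inner_add_right, ← map_add, sub_add_cancel, inner_projPerp_left_eq_right, hθX,
            real_inner_projPerp_self]
      _ ≤ ⟪W, θ W⟫ := by linarith
  have hWQplus : W ∈ (span ℝ (Qplus : Set E))ᗮ := mem_orthogonal_span_iff.2 fun β hβ => by
    obtain ⟨α, hα, n, rfl⟩ := horbit β hβ
    rw [← θ.zpow_apply_eq_self hθW n, LinearIsometryEquiv.inner_map_map]
    exact inner_right_of_mem_orthogonal (subset_span hα) hW
  have hW0 : ‖W‖ ^ 2 = 0 := by
    rw [← real_inner_projPerp_self]
    exact inner_right_of_mem_orthogonal hXspan hWQplus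
  simpa using hW0

theorem eq_zero_of_mem_admissibleCone {Δ : Finset E} (hΔ : LinearIndepOn ℝ id (Δ : Set E))
    {θ : E ≃ₗᵢ[ℝ] E} (hθΔ : ∀ α ∈ Δ, θ α ∈ Δ) (hQΔ : Q ⊆ Δ) (hQ₀ : Q₀ = Q.filter (θ · ∈ Q))
    (hQplus : Qplus = Δ.filter fun β => ∃ α ∈ Q, ∃ n : ℤ, (θ ^ n) α = β)
    (hϖmem : ∀ γ ∈ Q \ Q₀, ϖ γ ∈ span ℝ (Q : Set E))
    (hϖdual : ∀ γ ∈ Q \ Q₀, ∀ δ ∈ Q \ Q₀, ⟪ϖ γ, projPerp Q₀ δ⟫ = if δ = γ then 1 else 0)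
    {X : E} (hX : X ∈ admissibleCone Q Q₀ Qplus ϖ) (hq : projPerp Q (X - θ X) = 0) : X = 0 := by
  subst hQ₀ hQplus
  have hθQ : ∀ γ ∈ Q \ Q.filter (θ · ∈ Q),
      θ γ ∈ (Δ.filter fun β => ∃ α ∈ Q, ∃ n : ℤ, (θ ^ n) α = β) \ Q := by
    intro γ hγ
    simp only [Finset.mem_sdiff, Finset.mem_filter, not_and] at hγ ⊢
    exact ⟨⟨hθΔ γ (hQΔ hγ.1), γ, hγ.1, 1, by simp⟩, hγ.2 hγ.1⟩
  have hXQ : X ∈ span ℝ (Q : Set E) := projPerp_eq_zero_iff.1 <|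
    projPerp_eq_zero_of_mem_admissibleCone (Finset.filter_subset _ _)
      (fun α hα => (Finset.mem_filter.1 hα).2) hθQ (fun β hβ => (Finset.mem_filter.1 hβ).2)
      hϖmem hϖdual hX hq
  have hθXQ : θ X ∈ span ℝ (Q : Set E) := by
    simpa using sub_mem hXQ (projPerp_eq_zero_iff.1 hq)
  have hXQ₀ : X ∈ span ℝ (Q.filter (θ · ∈ Q) : Set E) := by
    rw [Finset.coe_filter]
    exact mem_span_sep_of_mem_span_of_map_mem_span hΔ hQΔ θ.toLinearEquiv
      (by rintro _ ⟨α, hα, rfl⟩; exact hθΔ α (hQΔ hα)) hXQ hθXQ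
  exact inner_self_eq_zero.1 <|
    inner_right_of_mem_orthogonal hXQ₀ (mem_orthogonal_span_iff.2 hX.2.1)

end admissibleCone

theorem stmt_18_general
    (Δ : Finset V)
    (hli : LinearIndependent ℝ ((↑) : ↥(Δ : Set V) → V))
    (θ : V ≃ₗᵢ[ℝ] V) (hθΔ : Finset.image (⇑θ) Δ = Δ)
    (Q : Finset V) (hQΔ : Q ⊆ Δ)
    (Q₀ Qplus : Finset V)
    (hQ₀ : Q₀ = Q.filter fun α => θ α ∈ Q)
    (hQplus : Qplus = Δ.filter fun β => ∃ α ∈ Q, ∃ n : ℤ, (θ ^ n) α = β)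
    -- `ϖ` is the dual basis `Δ̂_{Q₀}^{Q}` of `Δ_{Q₀}^{Q}` in `V_{Q₀}^{Q}`
    (ϖ : V → V)
    (hϖmem : ∀ γ ∈ Q \ Q₀,
      ϖ γ ∈ Submodule.span ℝ (Q : Set V) ⊓ (Submodule.span ℝ (Q₀ : Set V))ᗮ)
    (hϖdual : ∀ γ ∈ Q \ Q₀, ∀ δ ∈ Q \ Q₀,
      ⟪ϖ γ, projPerp Q₀ δ⟫ = if δ = γ then 1 else 0) :
    ∃ c : ℝ, 0 < c ∧ ∀ X : V,
      X ∈ Submodule.span ℝ (Qplus : Set V) →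
      (∀ α ∈ Q₀, ⟪α, X⟫ = 0) →
      (∀ γ ∈ Qplus \ Q, 0 < ⟪projPerp Q γ, X⟫) →
      (∀ γ ∈ Q \ Q₀, ⟪ϖ γ, X⟫ ≤ 0) →
      ‖X‖ ≤ c * ‖projPerp Q (X - θ X)‖ := by
  have hθΔ' : ∀ α ∈ Δ, θ α ∈ Δ := fun α hα => hθΔ ▸ Finset.mem_image_of_mem θ hα
  obtain ⟨c, hc, hle⟩ := exists_norm_le_mul_norm_of_isClosed_of_smul_mem isClosed_admissibleCone
    (fun X hX r hr => smul_mem_admissibleCone hX hr.le)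
    ((span ℝ (Q : Set V))ᗮ.starProjection ∘L (ContinuousLinearMap.id ℝ V - (θ : V →L[ℝ] V)))
    fun X hX hq => eq_zero_of_mem_admissibleCone hli hθΔ' hQΔ hQ₀ hQplus
      (fun γ hγ => (mem_inf.1 (hϖmem γ hγ)).1) hϖdual hX hq
  exact ⟨c, hc, fun X h1 h2 h3 h4 => hle X ⟨h1, h2, fun γ hγ => (h3 γ hγ).le, h4⟩⟩

/-- Let `Δ` be an obtuse basis of `V` and `θ` a linear isometry with
`θ(Δ) = Δ`. Let `Q ⊆ Δ`, `Q₀ = Q ∩ θ⁻¹(Q)`, and `Q⁺` the union of the `θ`-orbits of the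
elements of `Q`. Let `q(X)` be the orthogonal projection of `X − θ X` onto
`𝔞_Q = (span Q)ᗮ`. Then there is `c > 0` such that `‖X‖ ≤ c ‖q(X)‖` for every `X` with:
`X ∈ span Q⁺`; `⟪α, X⟫ = 0` for all `α ∈ Q₀`; `τ_Q^{Q⁺}(X) = 1`; and `⟪ϖ, X⟫ ≤ 0` for
every member `ϖ` of the dual basis `Δ̂_{Q₀}^{Q}`. -/
theorem stmt_18
    (Δ : Finset V)
    (hli : LinearIndependent ℝ ((↑) : ↥(Δ : Set V) → V))
    (hspan : Submodule.span ℝ (Δ : Set V) = ⊤)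
    (hobtuse : ∀ α ∈ Δ, ∀ β ∈ Δ, α ≠ β → ⟪α, β⟫ ≤ 0)
    (θ : V ≃ₗᵢ[ℝ] V) (hθΔ : Finset.image (⇑θ) Δ = Δ)
    (Q : Finset V) (hQΔ : Q ⊆ Δ)
    (Q₀ Qplus : Finset V)
    (hQ₀ : Q₀ = Q.filter fun α => θ α ∈ Q)
    (hQplus : Qplus = Δ.filter fun β => ∃ α ∈ Q, ∃ n : ℤ, (θ ^ n) α = β)
    -- `ϖ` is the dual basis `Δ̂_{Q₀}^{Q}` of `Δ_{Q₀}^{Q}` in `V_{Q₀}^{Q}`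
    (ϖ : V → V)
    (hϖmem : ∀ γ ∈ Q \ Q₀,
      ϖ γ ∈ Submodule.span ℝ (Q : Set V) ⊓ (Submodule.span ℝ (Q₀ : Set V))ᗮ)
    (hϖdual : ∀ γ ∈ Q \ Q₀, ∀ δ ∈ Q \ Q₀,
      ⟪ϖ γ, projPerp Q₀ δ⟫ = if δ = γ then 1 else 0) :
    ∃ c : ℝ, 0 < c ∧ ∀ X : V,
      X ∈ Submodule.span ℝ (Qplus : Set V) →
      (∀ α ∈ Q₀, ⟪α, X⟫ = 0) →
      (∀ γ ∈ Qplus \ Q, 0 < ⟪projPerp Q γ, X⟫) →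
      (∀ γ ∈ Q \ Q₀, ⟪ϖ γ, X⟫ ≤ 0) →
      ‖X‖ ≤ c * ‖projPerp Q (X - θ X)‖ :=
  stmt_18_general Δ hli θ hθΔ Q hQΔ Q₀ Qplus hQ₀ hQplus ϖ hϖmem hϖdual
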